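/- With g C² with ∇g L-Lipschitz (L<1), D = Id − ∇g, and φ defined by φ(D(u)) = g(u) − ½‖∇g(u)‖² on Im(D), +∞ elsewhere: for all x ∈ ℝⁿ, φ(x) ≥ g(x), with equality whenever x is a fixed point of D (i.e., ∇g(x) = 0). -/

import Mathlib

/-!
Writing `x = D u = u - ∇g u`, the descent lemma for an `L`-smooth function gives
`g (D u) ≤ g u - (1 - L / 2) ‖∇g u‖² ≤ g u - ½ ‖∇g u‖² = φ (D u)` as soon as `L ≤ 1`;
off the image of `D` the inequality holds because `φ = ⊤`. At a critical point `x`,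
`D x = x` and `φ x = g x - ½ ‖0‖² = g x`.
-/

open InnerProductSpace
open scoped Gradient

section Descent

variable {E : Type*} [NormedAddCommGroup E] [InnerProductSpace ℝ E] [CompleteSpace E]
  {f : E → ℝ} {L : ℝ}

theorem hasDerivAt_comp_add_smul (hf : Differentiable ℝ f) (u v : E) (t : ℝ) :
    HasDerivAt (fun s : ℝ => f (u + s • v)) ⟪∇ f (u + t • v), v⟫_ℝ t := by
  have hline : HasDerivAt (fun s : ℝ => u + s • v) v t := by
    simpa using ((hasDerivAt_id t).smul_const v).const_add u
  have := (hf (u + t • v)).hasGradientAt.hasFDerivAt.comp_hasDerivAt t hline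
  rwa [toDual_apply_apply] at this

theorem image_add_le_of_gradient_lipschitz (hf : Differentiable ℝ f)
    (hlip : ∀ x y, ‖∇ f x - ∇ f y‖ ≤ L * ‖x - y‖) (u v : E) :
    f (u + v) ≤ f u + ⟪∇ f u, v⟫_ℝ + L / 2 * ‖v‖ ^ 2 := by
  -- `h` is antitone on `[0, ∞)`, and the claim is `h 1 ≤ h 0`.
  set h : ℝ → ℝ := fun t => f (u + t • v) - t * ⟪∇ f u, v⟫_ℝ - L / 2 * t ^ 2 * ‖v‖ ^ 2
  have hderiv : ∀ t, HasDerivAt h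
      (⟪∇ f (u + t • v), v⟫_ℝ - ⟪∇ f u, v⟫_ℝ - L * t * ‖v‖ ^ 2) t := by
    intro t
    have := (((hasDerivAt_comp_add_smul hf u v t).sub
      ((hasDerivAt_id t).mul_const ⟪∇ f u, v⟫_ℝ)).sub
      (((hasDerivAt_pow 2 t).const_mul (L / 2)).mul_const (‖v‖ ^ 2)))
    exact this.congr_deriv (by push_cast; ring)
  have hderiv_nonpos : ∀ t ∈ interior (Set.Ici (0 : ℝ)),
      ⟪∇ f (u + t • v), v⟫_ℝ - ⟪∇ f u, v⟫_ℝ - L * t * ‖v‖ ^ 2 ≤ 0 := by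
    intro t ht
    rw [interior_Ici] at ht
    have hgrad : ‖∇ f (u + t • v) - ∇ f u‖ ≤ L * (t * ‖v‖) := by
      simpa [norm_smul, abs_of_pos (Set.mem_Ioi.mp ht)] using hlip (u + t • v) u
    calc ⟪∇ f (u + t • v), v⟫_ℝ - ⟪∇ f u, v⟫_ℝ - L * t * ‖v‖ ^ 2
        = ⟪∇ f (u + t • v) - ∇ f u, v⟫_ℝ - L * t * ‖v‖ ^ 2 := by rw [inner_sub_left]
      _ ≤ ‖∇ f (u + t • v) - ∇ f u‖ * ‖v‖ - L * t * ‖v‖ ^ 2 := by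
        gcongr; exact real_inner_le_norm _ _
      _ ≤ L * (t * ‖v‖) * ‖v‖ - L * t * ‖v‖ ^ 2 := by gcongr
      _ = 0 := by ring
  have hanti : AntitoneOn h (Set.Ici 0) :=
    antitoneOn_of_hasDerivWithinAt_nonpos (convex_Ici 0)
      (fun t _ => (hderiv t).continuousAt.continuousWithinAt)
      (fun t _ => (hderiv t).hasDerivWithinAt) hderiv_nonpos
  have h10 : h 1 ≤ h 0 := hanti Set.self_mem_Ici (Set.mem_Ici.mpr zero_le_one) zero_le_one
  simp only [h, one_smul, zero_smul, add_zero] at h10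
  linarith

theorem image_sub_gradient_le (hf : Differentiable ℝ f)
    (hlip : ∀ x y, ‖∇ f x - ∇ f y‖ ≤ L * ‖x - y‖) (hL : L ≤ 1) (u : E) :
    f (u - ∇ f u) ≤ f u - ‖∇ f u‖ ^ 2 / 2 := by
  have := image_add_le_of_gradient_lipschitz hf hlip u (-∇ f u)
  rw [← sub_eq_add_neg, inner_neg_right, real_inner_self_eq_norm_sq, norm_neg] at this
  nlinarith [sq_nonneg ‖∇ f u‖]

end Descent

/-- With `D = Id − ∇g`, `∇g` `L`-Lipschitz with `L < 1`, and `φ(D u) = g(u) − ½‖∇g u‖²`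
on `Im D`, `+∞` elsewhere: `φ(x) ≥ g(x)` for all `x`, with equality whenever
`x` is a fixed point of `D` (i.e. `∇g x = 0`). -/
theorem stmt_4 {n : ℕ} (g : EuclideanSpace ℝ (Fin n) → ℝ) (L : ℝ)
    (hg : ContDiff ℝ 2 g) (hL : L < 1)
    (hlip : ∀ x y, ‖gradient g x - gradient g y‖ ≤ L * ‖x - y‖)
    (D : EuclideanSpace ℝ (Fin n) → EuclideanSpace ℝ (Fin n))
    (hD : ∀ x, D x = x - gradient g x)
    (φ : EuclideanSpace ℝ (Fin n) → EReal)
    (hφ : ∀ u, φ (D u) = ((g u - ‖gradient g u‖ ^ 2 / 2 : ℝ) : EReal))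
    (hφtop : ∀ x, x ∉ Set.range D → φ x = ⊤) :
    ∀ x : EuclideanSpace ℝ (Fin n),
      ((g x : ℝ) : EReal) ≤ φ x ∧ (gradient g x = 0 → φ x = ((g x : ℝ) : EReal)) := by
  intro x
  refine ⟨?_, fun hcrit => ?_⟩
  · by_cases hx : x ∈ Set.range D
    · obtain ⟨u, rfl⟩ := hx
      rw [hφ u, hD u, EReal.coe_le_coe_iff]
      exact image_sub_gradient_le (hg.differentiable two_ne_zero) hlip hL.le u
    · simp [hφtop x hx]
  · have hfix : D x = x := by rw [hD, hcrit, sub_zero]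
    simpa [hfix, hcrit] using hφ x
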